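/- Let R be a complex-valued continuous function on the triangle {(x,t) : 0 ≤ t ≤ x ≤ π}, and let K₁, K₂ be complex-valued continuous functions on this triangle. Suppose that for each λ ∈ ℂ, w(x,λ) = exp(−iλx) + ∫₀ˣ K₁(x,t)·exp(−iλt) dt and ẽ(x,λ) = exp(−iλx) + ∫₀ˣ K₂(x,t)·exp(−iλt) dt, and define z(x,λ) := ∫₀ˣ R(π−t, x−t)·w(t,λ)·ẽ(x−t,λ) dt. Then there exists a continuous function K on the triangle {(x,t) : 0 ≤ t ≤ x ≤ π}, independent of λ, such that z(x,λ) = B(x)·exp(−iλx) + ∫₀ˣ K(x,t)·exp(−iλt) dt for all x ∈ [0,π] and λ ∈ ℂ, where B(x) = ∫₀ˣ R(π−t, x−t) dt. -/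

import Mathlib

/-!
Expanding the product of the two transformation-operator representations, `w(t,λ) ẽ(x-t,λ)` is
`exp(-iλx)` plus integrals of `exp(-iλu)` against a copy of `K₂` shifted by `t`, a copy of `K₁`
shifted by `x - t`, and a truncated convolution of `K₁(t,·)` and `K₂(x-t,·)`. Integrating against
`R(π-t, x-t)` and exchanging the order of integration over the three regions (two triangles and a
square) brings `z` into the required form. The resulting kernel is continuous because parametric
integrals with continuously moving limits are; this needs `R`, `K₁`, `K₂` continuous on all of
`ℝ²`, which we arrange by Tietze extension from the closed triangle.
-/

open Complex MeasureTheory Set Real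

/-- The triangle `{(x,t) : 0 ≤ t ≤ x ≤ π}`. -/
def Triangle : Set (ℝ × ℝ) := {p | 0 ≤ p.2 ∧ p.2 ≤ p.1 ∧ p.1 ≤ Real.pi}

open Function

universe u v in
theorem IsClosed.exists_continuous_eqOn {X : Type u} {Y : Type v} [TopologicalSpace X]
    [NormalSpace X] [TopologicalSpace Y] [TietzeExtension.{u, v} Y] {s : Set X}
    (hs : IsClosed s) {f : X → Y} (hf : ContinuousOn f s) :
    ∃ g : X → Y, Continuous g ∧ EqOn g f s := by
  obtain ⟨g, hg⟩ := ContinuousMap.exists_restrict_eq hs ⟨_, hf.domRestrict⟩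
  exact ⟨g, g.continuous, fun p hp => congr($hg ⟨p, hp⟩)⟩

@[fun_prop]
theorem continuous_parametric_intervalIntegral_of_continuous_bounds {X E : Type*}
    [TopologicalSpace X] [FirstCountableTopology X] [NormedAddCommGroup E] [NormedSpace ℝ E]
    {F : X → ℝ → E} (hF : Continuous (uncurry F)) {a b : X → ℝ}
    (ha : Continuous a) (hb : Continuous b) :
    Continuous fun x => ∫ t in a x..b x, F x t := by
  have hsub : ∀ x, ∫ t in a x..b x, F x t = (∫ t in 0..b x, F x t) - ∫ t in 0..a x, F x t :=
    fun x => (intervalIntegral.integral_interval_sub_left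
      ((hF.uncurry_left x).intervalIntegrable _ _)
      ((hF.uncurry_left x).intervalIntegrable _ _)).symm
  simp only [hsub]
  fun_prop

section Fubini

variable {E : Type*} [NormedAddCommGroup E] [NormedSpace ℝ E] {H : ℝ → ℝ → E}
  {a₀ a₁ c₀ c₁ : ℝ} {f g φ ψ : ℝ → ℝ}

theorem intervalIntegral_intervalIntegral_eq_integral_indicator (ha : a₀ ≤ a₁)
    (hfg : ∀ t ∈ Icc a₀ a₁, f t ≤ g t) :
    ∫ t in a₀..a₁, ∫ u in f t..g t, H t u
      = ∫ t, ∫ u, {p : ℝ × ℝ | p.1 ∈ Icc a₀ a₁ ∧ p.2 ∈ Icc (f p.1) (g p.1)}.indicator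
          (uncurry H) (t, u) := by
  rw [intervalIntegral.integral_of_le ha, ← integral_Icc_eq_integral_Ioc,
    ← integral_indicator measurableSet_Icc]
  congr 1 with t
  by_cases ht : t ∈ Icc a₀ a₁
  · rw [indicator_of_mem ht, intervalIntegral.integral_of_le (hfg t ht),
      ← integral_Icc_eq_integral_Ioc, ← integral_indicator measurableSet_Icc]
    congr 1 with u
    simp [indicator, ht.1, ht.2]
  · rw [mem_Icc] at ht
    simp [indicator, ht]

theorem intervalIntegral_intervalIntegral_swap_of_iff
    (hH : ContinuousOn (uncurry H) (Icc a₀ a₁ ×ˢ Icc c₀ c₁)) (hf : Measurable f)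
    (hg : Measurable g) (ha : a₀ ≤ a₁) (hc : c₀ ≤ c₁) (hfg : ∀ t ∈ Icc a₀ a₁, f t ≤ g t)
    (hφψ : ∀ u ∈ Icc c₀ c₁, φ u ≤ ψ u)
    (hD : ∀ t u, t ∈ Icc a₀ a₁ ∧ u ∈ Icc (f t) (g t) ↔ u ∈ Icc c₀ c₁ ∧ t ∈ Icc (φ u) (ψ u)) :
    ∫ t in a₀..a₁, ∫ u in f t..g t, H t u = ∫ u in c₀..c₁, ∫ t in φ u..ψ u, H t u := by
  set D := {p : ℝ × ℝ | p.1 ∈ Icc a₀ a₁ ∧ p.2 ∈ Icc (f p.1) (g p.1)}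
  have hDbox : D ⊆ Icc a₀ a₁ ×ˢ Icc c₀ c₁ := fun p hp => ⟨hp.1, ((hD p.1 p.2).1 hp).1⟩
  have hDmeas : MeasurableSet D :=
    (measurable_fst measurableSet_Icc).inter
      ((measurableSet_le (hf.comp measurable_fst) measurable_snd).inter
        (measurableSet_le measurable_snd (hg.comp measurable_fst)))
  have hint : Integrable (D.indicator (uncurry H)) (volume.prod volume) := by
    rw [← Measure.volume_eq_prod, integrable_indicator_iff hDmeas]
    exact (hH.integrableOn_compact (isCompact_Icc.prod isCompact_Icc)).mono_set hDbox
  rw [intervalIntegral_intervalIntegral_eq_integral_indicator ha hfg,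
    intervalIntegral_intervalIntegral_eq_integral_indicator (H := fun u t => H t u) hc hφψ,
    integral_integral_swap (f := fun t u => D.indicator (uncurry H) (t, u)) hint]
  congr 1 with u
  congr 1 with t
  simp only [indicator_apply]
  exact if_congr (hD t u) rfl rfl

end Fubini

noncomputable def expI (lam : ℂ) (u : ℝ) : ℂ := Complex.exp (-Complex.I * lam * u)

@[fun_prop]
theorem continuous_expI (lam : ℂ) : Continuous (expI lam) := by
  unfold expI; fun_prop

theorem expI_add (lam : ℂ) (a b : ℝ) : expI lam (a + b) = expI lam a * expI lam b := by
  simp only [expI, ofReal_add, ← Complex.exp_add]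
  ring_nf

theorem expI_mul_intervalIntegral (lam : ℂ) (k : ℝ → ℂ) (a b : ℝ) :
    expI lam a * ∫ r in 0..b, k r * expI lam r = ∫ u in a..a + b, k (u - a) * expI lam u := by
  have hshift := intervalIntegral.integral_comp_add_left
    (fun u => k (u - a) * expI lam u) a (a := 0) (b := b)
  rw [add_zero] at hshift
  rw [← hshift, ← intervalIntegral.integral_const_mul]
  congr 1 with r
  simp only [add_sub_cancel_left, expI_add]
  ring

-- `[max 0 (u - b), min a u]` is the set of `s ∈ [0, a]` with `u - s ∈ [0, b]`.
noncomputable def convKernel (k₁ k₂ : ℝ → ℂ) (a b u : ℝ) : ℂ :=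
  ∫ s in max 0 (u - b)..min a u, k₁ s * k₂ (u - s)

@[fun_prop]
theorem Continuous.convKernel {X : Type*} [TopologicalSpace X] [FirstCountableTopology X]
    {k₁ k₂ : X → ℝ → ℂ} (hk₁ : Continuous (uncurry k₁)) (hk₂ : Continuous (uncurry k₂))
    {a b u : X → ℝ} (ha : Continuous a) (hb : Continuous b) (hu : Continuous u) :
    Continuous fun y => convKernel (k₁ y) (k₂ y) (a y) (b y) (u y) := by
  unfold _root_.convKernel
  fun_prop

theorem intervalIntegral_mul_intervalIntegral_expI (lam : ℂ) {k₁ k₂ : ℝ → ℂ}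
    (hk₁ : Continuous k₁) (hk₂ : Continuous k₂) {a b : ℝ} (ha : 0 ≤ a) (hb : 0 ≤ b) :
    (∫ s in 0..a, k₁ s * expI lam s) * (∫ r in 0..b, k₂ r * expI lam r)
      = ∫ u in 0..a + b, convKernel k₁ k₂ a b u * expI lam u := by
  calc (∫ s in 0..a, k₁ s * expI lam s) * (∫ r in 0..b, k₂ r * expI lam r)
      = ∫ s in 0..a, ∫ u in s..s + b, k₁ s * k₂ (u - s) * expI lam u := by
        rw [← intervalIntegral.integral_mul_const]
        congr 1 with s
        rw [mul_assoc, expI_mul_intervalIntegral, ← intervalIntegral.integral_const_mul]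
        simp only [mul_assoc]
    _ = ∫ u in 0..a + b, ∫ s in max 0 (u - b)..min a u, k₁ s * k₂ (u - s) * expI lam u := by
        refine intervalIntegral_intervalIntegral_swap_of_iff (by fun_prop) (by fun_prop)
          (by fun_prop) ha (by linarith) (fun s _ => by linarith) ?_ ?_
        · intro u hu
          exact max_le (le_min ha hu.1) (le_min (by linarith [hu.2]) (by linarith))
        · intro s u
          simp only [mem_Icc, max_le_iff, le_min_iff]
          constructor
          · rintro ⟨⟨h1, h2⟩, h3, h4⟩
            exact ⟨⟨by linarith, by linarith⟩, ⟨h1, by linarith⟩, h2, h3⟩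
          · rintro ⟨-, ⟨h1, h2⟩, h3, h4⟩
            exact ⟨⟨h1, h3⟩, h4, by linarith⟩
    _ = ∫ u in 0..a + b, convKernel k₁ k₂ a b u * expI lam u := by
        simp only [convKernel, intervalIntegral.integral_mul_const]

theorem expI_add_integral_mul_expI_add_integral (lam : ℂ) {k₁ k₂ : ℝ → ℂ} (hk₁ : Continuous k₁)
    (hk₂ : Continuous k₂) {a b c : ℝ} (ha : 0 ≤ a) (hb : 0 ≤ b) (habc : a + b = c) :
    (expI lam a + ∫ s in 0..a, k₁ s * expI lam s) * (expI lam b + ∫ r in 0..b, k₂ r * expI lam r)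
      = expI lam c + (∫ u in a..c, k₂ (u - a) * expI lam u)
        + (∫ u in b..c, k₁ (u - b) * expI lam u)
        + ∫ u in 0..c, convKernel k₁ k₂ a b u * expI lam u := by
  subst habc
  rw [add_mul, mul_add, mul_add, ← expI_add, expI_mul_intervalIntegral,
    mul_comm (∫ s in 0..a, _), expI_mul_intervalIntegral, add_comm b a,
    intervalIntegral_mul_intervalIntegral_expI lam hk₁ hk₂ ha hb]
  ring

noncomputable def weightedProductKernel (ρ P Q : ℝ × ℝ → ℂ) (x u : ℝ) : ℂ :=
  (∫ t in 0..u, ρ (x, t) * Q (x - t, u - t))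
    + (∫ t in x - u..x, ρ (x, t) * P (t, u - (x - t)))
    + ∫ t in 0..x, ρ (x, t) * convKernel (fun s => P (t, s)) (fun r => Q (x - t, r)) t (x - t) u

section WeightedProduct

variable {ρ P Q : ℝ × ℝ → ℂ}

theorem continuous_weightedProductKernel (hρ : Continuous ρ) (hP : Continuous P)
    (hQ : Continuous Q) :
    Continuous fun p : ℝ × ℝ => weightedProductKernel ρ P Q p.1 p.2 := by
  unfold weightedProductKernel
  fun_prop

theorem intervalIntegral_weighted_product_eq (hρ : Continuous ρ) (hP : Continuous P)
    (hQ : Continuous Q) (lam : ℂ) {x : ℝ} (hx : 0 ≤ x) :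
    ∫ t in 0..x, ρ (x, t) *
        ((expI lam t + ∫ s in 0..t, P (t, s) * expI lam s)
          * (expI lam (x - t) + ∫ r in 0..x - t, Q (x - t, r) * expI lam r))
      = (∫ t in 0..x, ρ (x, t)) * expI lam x
        + ∫ u in 0..x, weightedProductKernel ρ P Q x u * expI lam u := by
  have hexpand : ∀ t ∈ uIcc 0 x, ρ (x, t) *
        ((expI lam t + ∫ s in 0..t, P (t, s) * expI lam s)
          * (expI lam (x - t) + ∫ r in 0..x - t, Q (x - t, r) * expI lam r))
      = ρ (x, t) * expI lam x
        + (∫ u in t..x, ρ (x, t) * Q (x - t, u - t) * expI lam u)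
        + (∫ u in x - t..x, ρ (x, t) * P (t, u - (x - t)) * expI lam u)
        + ∫ u in 0..x, ρ (x, t) * convKernel (fun s => P (t, s)) (fun r => Q (x - t, r)) t
            (x - t) u * expI lam u := by
    intro t ht
    rw [uIcc_of_le hx] at ht
    rw [expI_add_integral_mul_expI_add_integral lam (by fun_prop) (by fun_prop) ht.1
      (sub_nonneg.2 ht.2) (add_sub_cancel t x)]
    simp only [mul_add, ← intervalIntegral.integral_const_mul, mul_assoc]
  have hQpart : ∫ t in 0..x, ∫ u in t..x, ρ (x, t) * Q (x - t, u - t) * expI lam u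
      = ∫ u in 0..x, (∫ t in 0..u, ρ (x, t) * Q (x - t, u - t)) * expI lam u := by
    rw [intervalIntegral_intervalIntegral_swap_of_iff (φ := fun _ => 0) (ψ := id) (by fun_prop)
      (by fun_prop) (by fun_prop) hx hx (fun t ht => ht.2) (fun u hu => hu.1)]
    · simp only [id, intervalIntegral.integral_mul_const]
    · intro t u
      simp only [mem_Icc, id]
      constructor <;> rintro ⟨⟨_, _⟩, _, _⟩ <;>
        exact ⟨⟨by linarith, by linarith⟩, by linarith, by linarith⟩
  have hPpart : ∫ t in 0..x, ∫ u in x - t..x, ρ (x, t) * P (t, u - (x - t)) * expI lam u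
      = ∫ u in 0..x, (∫ t in x - u..x, ρ (x, t) * P (t, u - (x - t))) * expI lam u := by
    rw [intervalIntegral_intervalIntegral_swap_of_iff (φ := fun u => x - u) (ψ := fun _ => x)
      (by fun_prop) (by fun_prop) (by fun_prop) hx hx (fun t ht => by linarith [ht.1])
      (fun u hu => by linarith [hu.1])]
    · simp only [intervalIntegral.integral_mul_const]
    · intro t u
      simp only [mem_Icc]
      constructor <;> rintro ⟨⟨_, _⟩, _, _⟩ <;>
        exact ⟨⟨by linarith, by linarith⟩, by linarith, by linarith⟩
  have hconvPart : ∫ t in 0..x, ∫ u in 0..x, ρ (x, t) * convKernel (fun s => P (t, s))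
        (fun r => Q (x - t, r)) t (x - t) u * expI lam u
      = ∫ u in 0..x, (∫ t in 0..x, ρ (x, t) * convKernel (fun s => P (t, s))
        (fun r => Q (x - t, r)) t (x - t) u) * expI lam u := by
    rw [intervalIntegral_intervalIntegral_swap_of_iff (φ := fun _ => 0) (ψ := fun _ => x)
      (by fun_prop) (by fun_prop) (by fun_prop) hx hx (fun _ _ => hx)
      (fun _ _ => hx) (fun _ _ => and_comm)]
    simp only [intervalIntegral.integral_mul_const]
  rw [intervalIntegral.integral_congr hexpand, intervalIntegral.integral_add,
    intervalIntegral.integral_add, intervalIntegral.integral_add,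
    intervalIntegral.integral_mul_const, hQpart, hPpart, hconvPart]
  simp only [weightedProductKernel, add_mul]
  rw [intervalIntegral.integral_add, intervalIntegral.integral_add]
  · ring
  all_goals exact Continuous.intervalIntegrable (by fun_prop) _ _

end WeightedProduct

theorem isClosed_triangle : IsClosed Triangle :=
  (isClosed_le continuous_const continuous_snd).inter
    ((isClosed_le continuous_snd continuous_fst).inter
      (isClosed_le continuous_fst continuous_const))

theorem mk_mem_triangle {x t : ℝ} (h₀ : 0 ≤ t) (h₁ : t ≤ x) (h₂ : x ≤ π) : (x, t) ∈ Triangle :=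
  ⟨h₀, h₁, h₂⟩

theorem eq_expI_add_of_eqOn_triangle {K : ℝ → ℝ → ℂ} {K' : ℝ × ℝ → ℂ}
    (hK : EqOn K' (fun p => K p.1 p.2) Triangle) {f : ℝ → ℂ → ℂ}
    (hf : ∀ lam : ℂ, ∀ x ∈ Icc (0:ℝ) π,
      f x lam = Complex.exp (-Complex.I * lam * x)
        + ∫ t in (0:ℝ)..x, K x t * Complex.exp (-Complex.I * lam * t))
    (lam : ℂ) {x : ℝ} (hx : x ∈ Icc 0 π) :
    f x lam = expI lam x + ∫ t in 0..x, K' (x, t) * expI lam t := by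
  rw [hf lam x hx]
  congr 1
  refine intervalIntegral.integral_congr fun t ht => ?_
  rw [uIcc_of_le hx.1] at ht
  rw [expI, hK (mk_mem_triangle ht.1 ht.2 hx.2)]

/-- If `w(x,λ) = exp(−iλx) + ∫₀ˣ K₁(x,t) exp(−iλt) dt` and
`ẽ(x,λ) = exp(−iλx) + ∫₀ˣ K₂(x,t) exp(−iλt) dt`, then
`z(x,λ) := ∫₀ˣ R(π−t, x−t) w(t,λ) ẽ(x−t,λ) dt` has the representation
`z(x,λ) = B(x) exp(−iλx) + ∫₀ˣ K(x,t) exp(−iλt) dt` with `K` continuous on the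
triangle and independent of `λ`, where `B(x) = ∫₀ˣ R(π−t, x−t) dt`. -/
theorem stmt_11 (R K₁ K₂ : ℝ → ℝ → ℂ)
    (hR : ContinuousOn (fun p : ℝ × ℝ => R p.1 p.2) Triangle)
    (hK₁ : ContinuousOn (fun p : ℝ × ℝ => K₁ p.1 p.2) Triangle)
    (hK₂ : ContinuousOn (fun p : ℝ × ℝ => K₂ p.1 p.2) Triangle)
    (w et : ℝ → ℂ → ℂ)
    (hw : ∀ lam : ℂ, ∀ x ∈ Icc (0:ℝ) Real.pi,
      w x lam = Complex.exp (-Complex.I * lam * x)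
        + ∫ t in (0:ℝ)..x, K₁ x t * Complex.exp (-Complex.I * lam * t))
    (het : ∀ lam : ℂ, ∀ x ∈ Icc (0:ℝ) Real.pi,
      et x lam = Complex.exp (-Complex.I * lam * x)
        + ∫ t in (0:ℝ)..x, K₂ x t * Complex.exp (-Complex.I * lam * t)) :
    ∃ K : ℝ → ℝ → ℂ,
      ContinuousOn (fun p : ℝ × ℝ => K p.1 p.2) Triangle ∧
      ∀ lam : ℂ, ∀ x ∈ Icc (0:ℝ) Real.pi,
        (∫ t in (0:ℝ)..x, R (Real.pi - t) (x - t) * w t lam * et (x - t) lam)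
        = (∫ t in (0:ℝ)..x, R (Real.pi - t) (x - t)) * Complex.exp (-Complex.I * lam * x)
          + ∫ t in (0:ℝ)..x, K x t * Complex.exp (-Complex.I * lam * t) := by
  obtain ⟨R', hR'c, hR'⟩ := isClosed_triangle.exists_continuous_eqOn hR
  obtain ⟨P, hPc, hP⟩ := isClosed_triangle.exists_continuous_eqOn hK₁
  obtain ⟨Q, hQc, hQ⟩ := isClosed_triangle.exists_continuous_eqOn hK₂
  set ρ : ℝ × ℝ → ℂ := fun p => R' (π - p.2, p.1 - p.2)
  have hρc : Continuous ρ := by fun_prop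
  refine ⟨weightedProductKernel ρ P Q,
    (continuous_weightedProductKernel hρc hPc hQc).continuousOn, fun lam x hx => ?_⟩
  have hRρ : ∀ t ∈ uIcc 0 x, R (π - t) (x - t) = ρ (x, t) := fun t ht => by
    rw [uIcc_of_le hx.1] at ht
    exact (hR' (mk_mem_triangle (by linarith [ht.2]) (by linarith [hx.2])
      (by linarith [ht.1]))).symm
  have hz : ∀ t ∈ uIcc 0 x, R (π - t) (x - t) * w t lam * et (x - t) lam
      = ρ (x, t) * ((expI lam t + ∫ s in 0..t, P (t, s) * expI lam s)
          * (expI lam (x - t) + ∫ r in 0..x - t, Q (x - t, r) * expI lam r)) := fun t ht => by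
    rw [hRρ t ht]
    rw [uIcc_of_le hx.1] at ht
    rw [eq_expI_add_of_eqOn_triangle hP hw lam ⟨ht.1, by linarith [ht.2, hx.2]⟩,
      eq_expI_add_of_eqOn_triangle hQ het lam ⟨by linarith [ht.2], by linarith [ht.1, hx.2]⟩,
      mul_assoc]
  rw [intervalIntegral.integral_congr hz, intervalIntegral.integral_congr hRρ]
  exact intervalIntegral_weighted_product_eq hρc hPc hQc lam hx.1
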